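/- arXiv:1008.3497 — 3 statements merged into one kernel-verified Lean document; each statement's English description precedes it below -/
import Mathlib

section
/- Let A be a C*-algebra and let a, b be positive elements of A. Then the following five conditions are equivalent: (i) a ∼_s b, i.e. there exists x ∈ A such that A_a = A_{x*x} and A_b = A_{xx*}; (ii) there exist positive elements a', b' ∈ A with A_a = A_{a'}, a' ∼ b' (Pedersen equivalence), and A_{b'} = A_b; (iii) there exists x ∈ A such that A_a = A_{x*x} and A_b = A_{xx*}; (iv) there exists a positive element b' ∈ A with a ∼ b' and A_{b'} = A_b; (v) there exists a positive element a' ∈ A with A_a = A_{a'} and a' ∼ b. -/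
open Filter Topology

noncomputable section

variable {A : Type*}

/-- The hereditary subalgebra `A_a`: the norm-closure of `{a * x * a : x ∈ A}`. -/
def herSub [NonUnitalCStarAlgebra A] (a : A) : Set A :=
  closure {y : A | ∃ x : A, y = a * x * a}

/-- The right ideal `E_a`: the norm-closure of `{a * x : x ∈ A}`. -/
def rightIdeal [NonUnitalCStarAlgebra A] (a : A) : Set A :=
  closure {y : A | ∃ x : A, y = a * x}

/-- Pedersen equivalence: `a = x* x` and `b = x x*` for some `x`. -/
def PedersenEquiv [NonUnitalCStarAlgebra A] (a b : A) : Prop :=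
  ∃ x : A, a = star x * x ∧ b = x * star x

/-- Blackadar equivalence `a ∼ₛ b`: there is `x ∈ A` with `A_a = A_{x*x}` and `A_b = A_{xx*}`. -/
def BlackadarEquiv [NonUnitalCStarAlgebra A] (a b : A) : Prop :=
  ∃ x : A, herSub a = herSub (star x * x) ∧ herSub b = herSub (x * star x)

/-- Blackadar subequivalence `a ≾ₛ b`: there is a positive `a' ∈ A_b` with `a ∼ₛ a'`. -/
def BlackadarLe [NonUnitalCStarAlgebra A] [PartialOrder A] (a b : A) : Prop :=
  ∃ a' : A, 0 ≤ a' ∧ a' ∈ herSub b ∧ BlackadarEquiv a a'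

/-- Cuntz subequivalence `a ≾ b`: there is a sequence `xₙ` with `‖xₙ* b xₙ - a‖ → 0`. -/
def CuntzLe [NonUnitalCStarAlgebra A] (a b : A) : Prop :=
  ∃ x : ℕ → A, Tendsto (fun n => ‖star (x n) * b * x n - a‖) atTop (𝓝 0)

/-- Cuntz equivalence `a ≈ b`. -/
def CuntzEquiv [NonUnitalCStarAlgebra A] (a b : A) : Prop :=
  CuntzLe a b ∧ CuntzLe b a

/-- Compact containment `a ⊂⊂ b`: there is a positive `e ∈ A_b` with `e * a = a`. -/
def CpctContained [NonUnitalCStarAlgebra A] [PartialOrder A] (a b : A) : Prop :=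
  ∃ e : A, 0 ≤ e ∧ e ∈ herSub b ∧ e * a = a

/-!
Only (iii) ⇒ (iv) and (iii) ⇒ (v) have content. Suppose `A_a = A_{x*x}` and let `x = v|x|` be the
polar decomposition in the bidual. The contractions `sₙ = x |x| (|x|² + εₙ)⁻¹` converge to `v` on
the closed right ideal generated by `|x|`, which contains `√a`; so `z = lim sₙ √a` exists and
`z*z = √a v*v √a = a`. Since also `sₙ |x| → x`, the elements `z` and `x` generate the same closed
right ideal, and `A_{zz*} = A_{xx*}` because `A_{ww*} = R_w ∩ R_w*` only depends on the closed right
ideal `R_w` generated by `w`. Applied to `x*` and `b` this gives (v).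

Functional calculus never leaves a hereditary subalgebra: `A_c` is a closed *-subalgebra
containing `c³`, hence `c = (c³)^{1/3}` and every `f(c)`.
-/

section
variable [NonUnitalCStarAlgebra A]

lemma mul_mem_rightIdeal (w u : A) : w * u ∈ rightIdeal w := subset_closure ⟨u, rfl⟩

lemma rightIdeal_subset_of_mem {w y : A} (hy : y ∈ rightIdeal w) :
    rightIdeal y ⊆ rightIdeal w := by
  refine closure_minimal ?_ isClosed_closure
  rintro - ⟨u, rfl⟩
  refine map_mem_closure (f := (· * u)) (continuous_mul_const u) hy ?_
  rintro - ⟨v, rfl⟩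
  exact ⟨v * u, mul_assoc w v u⟩

lemma herSub_subset_rightIdeal (c : A) : herSub c ⊆ rightIdeal c :=
  closure_mono fun _ ⟨x, hx⟩ => ⟨x * c, hx.trans (mul_assoc c x c)⟩

lemma mul_mul_mem_herSub {c p q : A} (hp : p ∈ herSub c) (hq : q ∈ herSub c) (y : A) :
    p * y * q ∈ herSub c := by
  refine map_mem_closure₂ (f := fun p q => p * y * q) (by fun_prop) hp hq ?_
  rintro - ⟨u, rfl⟩ - ⟨v, rfl⟩
  exact ⟨u * c * y * c * v, by noncomm_ring⟩

def herSubalgebra (c : A) (hc : IsSelfAdjoint c) : NonUnitalStarSubalgebra ℝ A where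
  carrier := herSub c
  zero_mem' := subset_closure ⟨0, by simp⟩
  add_mem' {p q} hp hq := by
    refine map_mem_closure₂ (f := (· + ·)) continuous_add hp hq ?_
    rintro - ⟨u, rfl⟩ - ⟨v, rfl⟩
    exact ⟨u + v, by noncomm_ring⟩
  mul_mem' {p q} hp hq := by
    refine map_mem_closure₂ (f := (· * ·)) continuous_mul hp hq ?_
    rintro - ⟨u, rfl⟩ - ⟨v, rfl⟩
    exact ⟨u * c * c * v, by noncomm_ring⟩
  smul_mem' r p hp := by
    refine map_mem_closure (f := (r • ·)) (continuous_const_smul r) hp ?_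
    rintro - ⟨u, rfl⟩
    exact ⟨r • u, by simp only [mul_smul_comm, smul_mul_assoc]⟩
  star_mem' {p} hp := by
    refine map_mem_closure continuous_star hp ?_
    rintro - ⟨u, rfl⟩
    exact ⟨star u, by simp [hc.star_eq, mul_assoc]⟩

variable [PartialOrder A] [StarOrderedRing A]

lemma self_mem_herSub {c : A} (hc : 0 ≤ c) : c ∈ herSub c := by
  have hcube : 0 ≤ c * c * c := CFC.nnrpow_three c ▸ CFC.nnrpow_nonneg
  have hroot : (c * c * c) ^ (3 : NNReal)⁻¹ = c := by
    rw [← CFC.nnrpow_three c, CFC.nnrpow_nnrpow_inv c three_ne_zero]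
  suffices (c * c * c) ^ (3 : NNReal)⁻¹ ∈ herSub c by rwa [hroot] at this
  rw [CFC.nnrpow_eq_cfcₙ_real _ _ hcube]
  exact NonUnitalStarAlgebra.elemental.le_of_mem (s := herSubalgebra c hc.isSelfAdjoint)
    isClosed_closure (subset_closure ⟨c, rfl⟩) (cfcₙ_mem_elemental _ _)

lemma cfcₙ_mem_herSub {c : A} (hc : 0 ≤ c) (f : ℝ → ℝ) : cfcₙ f c ∈ herSub c :=
  NonUnitalStarAlgebra.elemental.le_of_mem (s := herSubalgebra c hc.isSelfAdjoint)
    isClosed_closure (self_mem_herSub hc) (cfcₙ_mem_elemental _ _)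

end

section
variable [NonUnitalCStarAlgebra A] {ι : Type*} {l : Filter ι}

lemma isClosed_setOf_tendsto_mul {b : ι → A} {C : ℝ} (hb : ∀ i, ‖b i‖ ≤ C)
    {f : A → A} (hf : Continuous f) :
    IsClosed {y | Tendsto (fun i => b i * y) l (𝓝 (f y))} := by
  have hlip : ∀ i, LipschitzWith (Real.toNNReal C) (b i * ·) := fun i =>
    LipschitzWith.of_dist_le' fun y y' => by
      rw [dist_eq_norm, dist_eq_norm, ← mul_sub]
      exact (norm_mul_le _ _).trans (mul_le_mul_of_nonneg_right (hb i) (norm_nonneg _))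
  exact (LipschitzWith.uniformEquicontinuous _ _ hlip).equicontinuous.isClosed_setOfPred_tendsto hf

lemma tendsto_mul_of_mem_rightIdeal {b : ι → A} {C : ℝ} (hb : ∀ i, ‖b i‖ ≤ C)
    {w y : A} (hw : Tendsto (fun i => b i * w) l (𝓝 w)) (hy : y ∈ rightIdeal w) :
    Tendsto (fun i => b i * y) l (𝓝 y) := by
  refine closure_minimal ?_ (isClosed_setOf_tendsto_mul hb continuous_id) hy
  rintro - ⟨u, rfl⟩
  simpa [mul_assoc] using hw.mul_const u

lemma cauchySeq_mul_of_mem_rightIdeal [SemilatticeSup ι] [Nonempty ι] {s : ι → A} {C : ℝ}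
    (hs : ∀ i, ‖s i‖ ≤ C) {w y : A} (hw : CauchySeq fun i => s i * w) (hy : y ∈ rightIdeal w) :
    CauchySeq fun i => s i * y := by
  have hcauchy : ∀ y, (CauchySeq fun i => s i * y) ↔
      Tendsto (fun p : ι × ι => (s p.1 - s p.2) * y) atTop (𝓝 0) := fun y => by
    simp [cauchySeq_iff_tendsto_dist_atTop_0, tendsto_zero_iff_norm_tendsto_zero, dist_eq_norm,
      sub_mul]
  have hbound : ∀ p : ι × ι, ‖s p.1 - s p.2‖ ≤ C + C := fun p =>
    (norm_sub_le _ _).trans (add_le_add (hs p.1) (hs p.2))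
  rw [hcauchy] at hw ⊢
  refine closure_minimal (t := {y | Tendsto _ _ (𝓝 ((fun _ => 0) y))}) ?_
    (isClosed_setOf_tendsto_mul hbound continuous_const) hy
  rintro - ⟨u, rfl⟩
  simpa [mul_assoc] using hw.mul_const u

lemma mem_rightIdeal_of_tendsto_mul [l.NeBot] {s : ι → A} {C : ℝ}
    (hs : ∀ i, ‖s i‖ ≤ C) {h z k L : A} (hz : Tendsto (fun i => s i * h) l (𝓝 z))
    (hk : k ∈ rightIdeal h) (hL : Tendsto (fun i => s i * k) l (𝓝 L)) : L ∈ rightIdeal z := by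
  have hdist : ∀ u, ‖L - z * u‖ ≤ C * ‖k - h * u‖ := fun u => by
    refine le_of_tendsto' (hL.sub (hz.mul_const u)).norm fun i => ?_
    rw [mul_assoc, ← mul_sub]
    exact (norm_mul_le _ _).trans (mul_le_mul_of_nonneg_right (hs i) (norm_nonneg _))
  obtain ⟨v, hv, hvk⟩ := mem_closure_iff_seq_limit.mp hk
  choose u hu using hv
  refine mem_closure_of_tendsto (b := atTop) (f := fun n => z * u n) ?_
    (Eventually.of_forall fun n => ⟨u n, rfl⟩)
  have hvanish : Tendsto (fun n => C * ‖v n - k‖) atTop (𝓝 0) := by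
    simpa using (tendsto_iff_norm_sub_tendsto_zero.mp hvk).const_mul C
  rw [tendsto_iff_norm_sub_tendsto_zero]
  refine squeeze_zero (fun _ => norm_nonneg _) (fun n => ?_) hvanish
  rw [norm_sub_rev, hu n, norm_sub_rev (h * u n)]
  exact hdist (u n)

lemma norm_mul_cfcₙ_sub_self_sq (x : A) {f : ℝ → ℝ}
    (hf : ContinuousOn f (quasispectrum ℝ (star x * x))) (hf0 : f 0 = 0) :
    ‖x * cfcₙ f (star x * x) - x‖ ^ 2 = ‖cfcₙ (fun t => t * (f t - 1) ^ 2) (star x * x)‖ := by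
  have hstar : star (cfcₙ f (star x * x)) = cfcₙ f (star x * x) := IsSelfAdjoint.cfcₙ.star_eq
  have hcfc : cfcₙ (fun t => t * (f t - 1) ^ 2) (star x * x)
      = star (x * cfcₙ f (star x * x) - x) * (x * cfcₙ f (star x * x) - x) := by
    rw [show (fun t => t * (f t - 1) ^ 2) = fun t => f t * t * f t - f t * t - t * f t + t by
      ext; ring]
    rw [cfcₙ_add .., cfcₙ_sub .., cfcₙ_sub .., cfcₙ_mul .., cfcₙ_mul .., cfcₙ_mul ..,
      cfcₙ_id' ℝ (star x * x), star_sub, star_mul, hstar]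
    noncomm_ring
  rw [sq, ← CStarRing.norm_star_mul_self, hcfc]


end

section
variable {ε t : ℝ}

lemma abs_div_add_le_one (ht : 0 ≤ t) (hε : 0 < ε) : |t / (t + ε)| ≤ 1 := by
  rw [abs_of_nonneg (by positivity), div_le_one (by positivity)]
  linarith

lemma mul_div_add_sub_one_sq_le (ht : 0 ≤ t) (hε : 0 < ε) : t * (t / (t + ε) - 1) ^ 2 ≤ ε := by
  have hpos : 0 < t + ε := by positivity
  have hrw : t * (t / (t + ε) - 1) ^ 2 = t * ε ^ 2 / (t + ε) ^ 2 := by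
    field_simp; ring
  rw [hrw, div_le_iff₀ (by positivity)]
  nlinarith [mul_nonneg ht hε.le, mul_nonneg (mul_nonneg ht hε.le) hε.le]

lemma abs_div_add_sq_mul_sub_le (ht : 0 ≤ t) (hε : 0 < ε) :
    |(t / (t + ε)) ^ 2 * t - t| ≤ 2 * ε := by
  have hpos : 0 < t + ε := by positivity
  have hrw : (t / (t + ε)) ^ 2 * t - t = -(t * ε * (2 * t + ε) / (t + ε) ^ 2) := by
    field_simp; ring
  rw [hrw, abs_neg, abs_of_nonneg (by positivity), div_le_iff₀ (by positivity)]
  nlinarith [mul_nonneg ht hε.le, mul_nonneg (mul_nonneg ht hε.le) hε.le,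
    mul_nonneg (mul_nonneg hε.le hε.le) hε.le]

lemma sqrt_div_add_mul_mul_sqrt_div_add (ht : 0 ≤ t) :
    √t / (t + ε) * t * (√t / (t + ε)) = (t / (t + ε)) ^ 2 := by
  calc √t / (t + ε) * t * (√t / (t + ε)) = √t * √t * t * ((t + ε)⁻¹ * (t + ε)⁻¹) := by ring
    _ = (t / (t + ε)) ^ 2 := by rw [Real.mul_self_sqrt ht]; ring

lemma sqrt_div_add_mul_sqrt (ht : 0 ≤ t) : √t / (t + ε) * √t = t / (t + ε) := by
  rw [div_mul_eq_mul_div, Real.mul_self_sqrt ht]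

end

section
variable [NonUnitalCStarAlgebra A] [PartialOrder A] [StarOrderedRing A] {ι : Type*}
  {l : Filter ι} {c : A} {ε : ℝ}

lemma norm_cfcₙ_le_of_nonneg (hc : 0 ≤ c) {f : ℝ → ℝ} {M : ℝ}
    (hf : ∀ t, 0 ≤ t → |f t| ≤ M) : ‖cfcₙ f c‖ ≤ M :=
  norm_cfcₙ_le fun t ht => hf t (quasispectrum_nonneg_of_nonneg c hc t ht)

lemma continuousOn_div_add (hc : 0 ≤ c) {g : ℝ → ℝ} (hg : Continuous g) (hε : 0 < ε) :
    ContinuousOn (fun t => g t / (t + ε)) (quasispectrum ℝ c) :=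
  hg.continuousOn.div (by fun_prop) fun t ht =>
    (add_pos_of_nonneg_of_pos (quasispectrum_nonneg_of_nonneg c hc t ht) hε).ne'

lemma norm_cfcₙ_div_add_le_one (hc : 0 ≤ c) (hε : 0 < ε) :
    ‖cfcₙ (fun t => t / (t + ε)) c‖ ≤ 1 :=
  norm_cfcₙ_le_of_nonneg hc fun _ ht => abs_div_add_le_one ht hε

lemma norm_cfcₙ_div_add_sq_le_one (hc : 0 ≤ c) (hε : 0 < ε) :
    ‖cfcₙ (fun t => (t / (t + ε)) ^ 2) c‖ ≤ 1 :=
  norm_cfcₙ_le_of_nonneg hc fun t ht => by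
    rw [abs_pow]; exact pow_le_one₀ (abs_nonneg _) (abs_div_add_le_one ht hε)

lemma tendsto_mul_cfcₙ_div_add (x : A) {ε : ι → ℝ} (hε : ∀ i, 0 < ε i)
    (hε0 : Tendsto ε l (𝓝 0)) :
    Tendsto (fun i => x * cfcₙ (fun t => t / (t + ε i)) (star x * x)) l (𝓝 x) := by
  have hc := star_mul_self_nonneg x
  have hsq : ∀ i, ‖x * cfcₙ (fun t => t / (t + ε i)) (star x * x) - x‖ ^ 2 ≤ ε i := fun i => by
    rw [norm_mul_cfcₙ_sub_self_sq x (continuousOn_div_add hc continuous_id' (hε i)) (by simp)]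
    refine norm_cfcₙ_le_of_nonneg hc fun t ht => ?_
    rw [abs_of_nonneg (by positivity)]
    exact mul_div_add_sub_one_sq_le ht (hε i)
  rw [tendsto_iff_norm_sub_tendsto_zero]
  refine squeeze_zero (fun _ => norm_nonneg _)
    (fun i => (le_abs_self _).trans (Real.abs_le_sqrt (hsq i))) ?_
  simpa [Function.comp_def] using (Real.continuous_sqrt.tendsto 0).comp hε0

lemma tendsto_cfcₙ_div_add_sq_mul_self (hc : 0 ≤ c) {ε : ι → ℝ} (hε : ∀ i, 0 < ε i)
    (hε0 : Tendsto ε l (𝓝 0)) :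
    Tendsto (fun i => cfcₙ (fun t => (t / (t + ε i)) ^ 2) c * c) l (𝓝 c) := by
  have hdist : ∀ i, ‖cfcₙ (fun t => (t / (t + ε i)) ^ 2) c * c - c‖ ≤ 2 * ε i := fun i => by
    have hcont : ContinuousOn (fun t => (t / (t + ε i)) ^ 2) (quasispectrum ℝ c) :=
      (continuousOn_div_add hc continuous_id' (hε i)).pow 2
    have hcfc : cfcₙ (fun t => (t / (t + ε i)) ^ 2 * t - t) c
        = cfcₙ (fun t => (t / (t + ε i)) ^ 2) c * c - c := by
      rw [cfcₙ_sub .., cfcₙ_mul .., cfcₙ_id' ℝ c]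
    rw [← hcfc]
    exact norm_cfcₙ_le_of_nonneg hc fun t ht => abs_div_add_sq_mul_sub_le ht (hε i)
  rw [tendsto_iff_norm_sub_tendsto_zero]
  exact squeeze_zero (fun _ => norm_nonneg _) hdist (by simpa using hε0.const_mul 2)

lemma tendsto_cfcₙ_div_add_mul (w : A) {ε : ι → ℝ}
    (hε : ∀ i, 0 < ε i) (hε0 : Tendsto ε l (𝓝 0)) :
    Tendsto (fun i => cfcₙ (fun t => t / (t + ε i)) (w * star w) * w) l (𝓝 w) := by
  simpa [star_star, IsSelfAdjoint.cfcₙ.star_eq] using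
    (tendsto_mul_cfcₙ_div_add (star w) hε hε0).star

lemma herSub_mul_star_eq (w : A) :
    herSub (w * star w) = rightIdeal w ∩ star ⁻¹' rightIdeal w := by
  apply Set.Subset.antisymm
  · refine closure_minimal ?_ (isClosed_closure.inter (isClosed_closure.preimage continuous_star))
    rintro - ⟨u, rfl⟩
    refine ⟨subset_closure ⟨star w * u * (w * star w), by noncomm_ring⟩,
      subset_closure ⟨star w * star u * (w * star w), ?_⟩⟩
    simp only [star_mul, star_star]
    noncomm_ring
  · rintro y ⟨hy, hy'⟩
    have hc : 0 ≤ w * star w := mul_star_self_nonneg w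
    set ε : ℕ → ℝ := fun n => 1 / (n + 1)
    have hε : ∀ n, 0 < ε n := fun n => Nat.one_div_pos_of_nat
    set e : ℕ → A := fun n => cfcₙ (fun t => t / (t + ε n)) (w * star w)
    have he : ∀ n, ‖e n‖ ≤ 1 := fun n => norm_cfcₙ_div_add_le_one hc (hε n)
    have he_star : ∀ n, star (e n) = e n := fun _ => IsSelfAdjoint.cfcₙ.star_eq
    have hew := tendsto_cfcₙ_div_add_mul w hε tendsto_one_div_add_atTop_nhds_zero_nat
    have hleft : Tendsto (fun n => e n * y) atTop (𝓝 y) := tendsto_mul_of_mem_rightIdeal he hew hy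
    have hright : Tendsto (fun n => y * e n) atTop (𝓝 y) := by
      simpa [he_star] using (tendsto_mul_of_mem_rightIdeal he hew hy').star
    have hboth : Tendsto (fun n => e n * y * e n) atTop (𝓝 y) := by
      have hfirst : Tendsto (fun n => e n * (y * e n - y)) atTop (𝓝 0) := by
        refine tendsto_zero_iff_norm_tendsto_zero.2 (squeeze_zero (fun _ => norm_nonneg _)
          (fun n => (norm_mul_le _ _).trans (mul_le_of_le_one_left (norm_nonneg _) (he n)))
          (tendsto_iff_norm_sub_tendsto_zero.1 hright))
      rw [← tendsto_sub_nhds_zero_iff]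
      simpa [mul_sub, mul_assoc] using hfirst.add (tendsto_sub_nhds_zero_iff.2 hleft)
    exact isClosed_closure.mem_of_tendsto hboth (Eventually.of_forall fun n =>
      mul_mul_mem_herSub (cfcₙ_mem_herSub hc _) (cfcₙ_mem_herSub hc _) y)

end

section
variable [NonUnitalCStarAlgebra A] [PartialOrder A] [StarOrderedRing A] {ε : ℝ}

/-- Approximates the partial isometry `v` of the polar decomposition `x = v |x|`. -/
def polarApprox (x : A) (ε : ℝ) : A := x * cfcₙ (fun t => √t / (t + ε)) (star x * x)

lemma star_polarApprox_mul_self (x : A) (hε : 0 < ε) :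
    star (polarApprox x ε) * polarApprox x ε = cfcₙ (fun t => (t / (t + ε)) ^ 2) (star x * x) := by
  have hc := star_mul_self_nonneg x
  have hd := continuousOn_div_add hc Real.continuous_sqrt hε
  have hcfc : cfcₙ (fun t => √t / (t + ε) * t * (√t / (t + ε))) (star x * x)
      = cfcₙ (fun t => √t / (t + ε)) (star x * x) * (star x * x)
        * cfcₙ (fun t => √t / (t + ε)) (star x * x) := by
    rw [cfcₙ_mul .., cfcₙ_mul .., cfcₙ_id' ℝ (star x * x)]
  rw [polarApprox, star_mul, IsSelfAdjoint.cfcₙ.star_eq,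
    ← cfcₙ_congr fun t ht => sqrt_div_add_mul_mul_sqrt_div_add (ε := ε)
      (quasispectrum_nonneg_of_nonneg _ hc t ht), hcfc]
  noncomm_ring

lemma norm_polarApprox_le_one (x : A) (hε : 0 < ε) : ‖polarApprox x ε‖ ≤ 1 := by
  have hsq : ‖polarApprox x ε‖ * ‖polarApprox x ε‖ ≤ 1 := by
    rw [← CStarRing.norm_star_mul_self, star_polarApprox_mul_self x hε]
    exact norm_cfcₙ_div_add_sq_le_one (star_mul_self_nonneg x) hε
  nlinarith [norm_nonneg (polarApprox x ε)]

lemma polarApprox_mul_sqrt (x : A) (hε : 0 < ε) :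
    polarApprox x ε * CFC.sqrt (star x * x) = x * cfcₙ (fun t => t / (t + ε)) (star x * x) := by
  have hc := star_mul_self_nonneg x
  have hd := continuousOn_div_add hc Real.continuous_sqrt hε
  rw [polarApprox, CFC.sqrt_eq_real_sqrt _ hc, mul_assoc, ← cfcₙ_mul ..]
  exact congrArg (x * ·) (cfcₙ_congr fun t ht =>
    sqrt_div_add_mul_sqrt (quasispectrum_nonneg_of_nonneg _ hc t ht))

lemma exists_star_mul_self_eq_and_herSub_eq {a x : A} (ha : 0 ≤ a)
    (hax : herSub a = herSub (star x * x)) :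
    ∃ z, star z * z = a ∧ herSub (z * star z) = herSub (x * star x) := by
  have hc := star_mul_self_nonneg x
  set ε : ℕ → ℝ := fun n => 1 / (n + 1)
  have hε : ∀ n, 0 < ε n := fun n => Nat.one_div_pos_of_nat
  have hε0 : Tendsto ε atTop (𝓝 0) := tendsto_one_div_add_atTop_nhds_zero_nat
  have hs : ∀ n, ‖polarApprox x (ε n)‖ ≤ 1 := fun n => norm_polarApprox_le_one x (hε n)
  have hsx : Tendsto (fun n => polarApprox x (ε n) * CFC.sqrt (star x * x)) atTop (𝓝 x) := by
    simpa only [polarApprox_mul_sqrt x (hε _)] using tendsto_mul_cfcₙ_div_add x hε hε0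
  have hh : CFC.sqrt a ∈ rightIdeal (star x * x) := by
    refine herSub_subset_rightIdeal _ ?_
    rw [← hax, CFC.sqrt_eq_real_sqrt a ha]
    exact cfcₙ_mem_herSub ha _
  have hsqrt : CFC.sqrt (star x * x) ∈ rightIdeal (CFC.sqrt a) := by
    refine rightIdeal_subset_of_mem ?_ (herSub_subset_rightIdeal a ?_)
    · simpa [CFC.sqrt_mul_sqrt_self a ha] using mul_mem_rightIdeal (CFC.sqrt a) (CFC.sqrt a)
    · rw [hax, CFC.sqrt_eq_real_sqrt _ hc]
      exact cfcₙ_mem_herSub hc _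
  obtain ⟨z, hz⟩ : ∃ z, Tendsto (fun n => polarApprox x (ε n) * CFC.sqrt a) atTop (𝓝 z) := by
    refine cauchySeq_tendsto_of_complete (cauchySeq_mul_of_mem_rightIdeal hs hsx.cauchySeq ?_)
    refine rightIdeal_subset_of_mem ?_ hh
    simpa [CFC.sqrt_mul_sqrt_self _ hc] using
      mul_mem_rightIdeal (CFC.sqrt (star x * x)) (CFC.sqrt (star x * x))
  refine ⟨z, ?_, ?_⟩
  · have hunit : Tendsto (fun n => cfcₙ (fun t => (t / (t + ε n)) ^ 2) (star x * x) * CFC.sqrt a)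
        atTop (𝓝 (CFC.sqrt a)) :=
      tendsto_mul_of_mem_rightIdeal (fun n => norm_cfcₙ_div_add_sq_le_one hc (hε n))
        (tendsto_cfcₙ_div_add_sq_mul_self hc hε hε0) hh
    have hrw : ∀ n, star (polarApprox x (ε n) * CFC.sqrt a) * (polarApprox x (ε n) * CFC.sqrt a)
        = CFC.sqrt a * (cfcₙ (fun t => (t / (t + ε n)) ^ 2) (star x * x) * CFC.sqrt a) :=
      fun n => by
        rw [star_mul, (CFC.sqrt_nonneg a).isSelfAdjoint.star_eq,
          ← star_polarApprox_mul_self x (hε n)]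
        noncomm_ring
    refine tendsto_nhds_unique (hz.star.mul hz) ?_
    simp only [hrw]
    simpa only [CFC.sqrt_mul_sqrt_self a ha] using hunit.const_mul (CFC.sqrt a)
  · have hzx : z ∈ rightIdeal x := isClosed_closure.mem_of_tendsto hz
      (Eventually.of_forall fun _ => subset_closure ⟨_, mul_assoc _ _ _⟩)
    have hxz : x ∈ rightIdeal z := mem_rightIdeal_of_tendsto_mul hs hz hsqrt hsx
    rw [herSub_mul_star_eq, herSub_mul_star_eq,
      (rightIdeal_subset_of_mem hzx).antisymm (rightIdeal_subset_of_mem hxz)]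

end

/-- the five characterizations of Blackadar equivalence are equivalent. -/
theorem blackadarEquiv_tfae [NonUnitalCStarAlgebra A] [PartialOrder A] [StarOrderedRing A]
    (a b : A) (ha : 0 ≤ a) (hb : 0 ≤ b) :
    List.TFAE
      [BlackadarEquiv a b,
       ∃ a' b' : A, 0 ≤ a' ∧ 0 ≤ b' ∧ herSub a = herSub a' ∧ PedersenEquiv a' b' ∧
         herSub b' = herSub b,
       ∃ x : A, herSub a = herSub (star x * x) ∧ herSub b = herSub (x * star x),
       ∃ b' : A, 0 ≤ b' ∧ PedersenEquiv a b' ∧ herSub b' = herSub b,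
       ∃ a' : A, 0 ≤ a' ∧ herSub a = herSub a' ∧ PedersenEquiv a' b] := by
  tfae_have 1 ↔ 3 := Iff.rfl
  tfae_have 3 → 2
  | ⟨x, hax, hbx⟩ => ⟨star x * x, x * star x, star_mul_self_nonneg x, mul_star_self_nonneg x,
      hax, ⟨x, rfl, rfl⟩, hbx.symm⟩
  tfae_have 2 → 3
  | ⟨_, _, _, _, hax, ⟨x, ha', hb'⟩, hbx⟩ => ⟨x, ha' ▸ hax, hb' ▸ hbx.symm⟩
  tfae_have 4 → 2
  | ⟨b', hb', hab', hb'b⟩ => ⟨a, b', ha, hb', rfl, hab', hb'b⟩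
  tfae_have 5 → 2
  | ⟨a', ha', haa', ha'b⟩ => ⟨a', b, ha', hb, haa', ha'b, rfl⟩
  tfae_have 3 → 4
  | ⟨x, hax, hbx⟩ => by
    obtain ⟨z, hza, hzx⟩ := exists_star_mul_self_eq_and_herSub_eq ha hax
    exact ⟨z * star z, mul_star_self_nonneg z, ⟨z, hza.symm, rfl⟩, hzx.trans hbx.symm⟩
  tfae_have 3 → 5
  | ⟨x, hax, hbx⟩ => by
    obtain ⟨z, hzb, hzx⟩ :=
      exists_star_mul_self_eq_and_herSub_eq hb (x := star x) (by rwa [star_star])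
    refine ⟨z * star z, mul_star_self_nonneg z, ?_, star z, by rw [star_star], ?_⟩
    · rw [hax, hzx, star_star]
    · rw [star_star, hzb]
  tfae_finish
end
end

section
/- Let A be a C*-algebra. The Blackadar relation ∼_s is an equivalence relation on the set of positive elements of A: it is reflexive, symmetric, and transitive. -/
open Filter Topology

noncomputable section

variable {A : Type*}

/-
For `w ∈ A` write `t = w* w`. Functional calculus gives self-adjoint `eₙ ∈ C*(t)` with
`‖w - w t eₙ‖² = ‖cfc (s ↦ s / (1 + cₙ² s²)²) t‖ ≤ 1 / (2 cₙ)` for scalars `cₙ → ∞`; conjugating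
by `w t eₙ` then approximates `w* v w` by elements `t (eₙ w* v w eₙ) t`, so `A_{w* w}` is the
closure of `w* A w`.
With this description, `A_{(yx)*(yx)}` is the closure of `x* A_{y* y} x`, so the condition
`A_{y* y} = A_{x x*}` linking two Blackadar equivalences makes it equal to the closure of
`x* A_{x x*} x`, that is to `A_{(x* x)²} = A_{x* x}`: the product `y x` implements the composite.
-/

section

variable [NonUnitalCStarAlgebra A]

lemma herSub_eq_closure_range_of_isSelfAdjoint {a : A} (ha : IsSelfAdjoint a) :
    herSub a = closure (Set.range fun x => star a * x * a) := by
  simp only [herSub, ha.star_eq, Set.range, eq_comm]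

lemma star_sub_mul_mul_sub_mul_cfcₙ (w : A) {h : ℝ → ℝ} (hh : Continuous h) (h0 : h 0 = 0) :
    star (w - w * cfcₙ h (star w * w)) * (w - w * cfcₙ h (star w * w)) =
      cfcₙ (fun s => s * (1 - h s) ^ 2) (star w * w) := by
  have ht : IsSelfAdjoint (star w * w) := .star_mul_self w
  have hfun : (fun s => s * (1 - h s) ^ 2) = fun s => s - s * h s - h s * s + h s * s * h s := by
    ext s; ring
  rw [hfun, cfcₙ_add .., cfcₙ_sub .., cfcₙ_sub .., cfcₙ_mul .., cfcₙ_mul .., cfcₙ_mul ..,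
    cfcₙ_mul .., cfcₙ_id' ℝ (star w * w), star_sub, star_mul,
    (cfcₙ_predicate h (star w * w)).star_eq]
  noncomm_ring

lemma abs_mul_one_sub_sq_le {c : ℝ} (hc : 0 < c) (s : ℝ) :
    |s| * (1 - s * (c ^ 2 * s / (1 + (c * s) ^ 2))) ^ 2 ≤ 1 / (2 * c) := by
  have hd : 0 < 1 + (c * s) ^ 2 := by positivity
  have hfun : 1 - s * (c ^ 2 * s / (1 + (c * s) ^ 2)) = 1 / (1 + (c * s) ^ 2) := by
    field_simp; ring
  rw [hfun, div_pow, one_pow, mul_one_div, div_le_div_iff₀ (by positivity) (by positivity)]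
  have hcs : |c * s| = c * |s| := by rw [abs_mul, abs_of_pos hc]
  nlinarith [sq_nonneg (|c * s| - 1), sq_abs (c * s), abs_nonneg (c * s)]

lemma norm_sub_mul_cfcₙ_sq_le (w : A) {c : ℝ} (hc : 0 < c) :
    ‖w - w * cfcₙ (fun s => s * (c ^ 2 * s / (1 + (c * s) ^ 2))) (star w * w)‖ ^ 2 ≤
      1 / (2 * c) := by
  have hcont : Continuous fun s : ℝ => s * (c ^ 2 * s / (1 + (c * s) ^ 2)) := by
    fun_prop (disch := intro s; positivity)
  rw [sq, ← CStarRing.norm_star_mul_self, star_sub_mul_mul_sub_mul_cfcₙ w hcont (by simp)]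
  refine norm_cfcₙ_le fun s _ => ?_
  rw [Real.norm_eq_abs, abs_mul, abs_sq]
  exact abs_mul_one_sub_sq_le hc s

lemma exists_tendsto_mul_star_mul_self_mul (w : A) :
    ∃ e : ℕ → A, (∀ n, IsSelfAdjoint (e n) ∧ Commute (star w * w) (e n)) ∧
      Tendsto (fun n => w * (star w * w * e n)) atTop (𝓝 w) := by
  set t := star w * w
  set c : ℕ → ℝ := fun n => ((n : ℝ) + 1) ^ 2
  set g : ℕ → ℝ → ℝ := fun n s => c n ^ 2 * s / (1 + (c n * s) ^ 2)
  have hg : ∀ n, Continuous (g n) := fun n => by fun_prop (disch := intro s; positivity)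
  have hmul : ∀ n, t * cfcₙ (g n) t = cfcₙ (fun s => s * g n s) t := fun n => by
    rw [cfcₙ_mul (fun s => s) (g n) t, cfcₙ_id' ℝ t]
  refine ⟨fun n => cfcₙ (g n) t, fun n => ⟨cfcₙ_predicate _ _, ?_⟩, ?_⟩
  · simpa only [cfcₙ_id' ℝ t] using cfcₙ_commute_cfcₙ (fun s => s) (g n) t
  have hbound : ∀ n : ℕ, ‖w * (t * cfcₙ (g n) t) - w‖ ≤ 1 / ((n : ℝ) + 1) := fun n => by
    have hsq := norm_sub_mul_cfcₙ_sq_le w (c := c n) (by positivity)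
    rw [← hmul, norm_sub_rev] at hsq
    refine (pow_le_pow_iff_left₀ (norm_nonneg _) (by positivity) two_ne_zero).1 (hsq.trans ?_)
    rw [div_pow, one_pow, div_le_div_iff₀ (by positivity) (by positivity)]
    nlinarith [sq_nonneg ((n : ℝ) + 1)]
  exact tendsto_iff_norm_sub_tendsto_zero.2 <|
    squeeze_zero (fun _ => norm_nonneg _) hbound tendsto_one_div_add_atTop_nhds_zero_nat

lemma star_mul_mul_mem_herSub (w v : A) : star w * v * w ∈ herSub (star w * w) := by
  obtain ⟨e, he, hlim⟩ := exists_tendsto_mul_star_mul_self_mul w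
  refine mem_closure_of_tendsto ((hlim.star.mul_const v).mul hlim)
    (Eventually.of_forall fun n => ⟨e n * (star w * v * w) * e n, ?_⟩)
  obtain ⟨hsa, hcomm⟩ := he n
  have hstar : star (star w * w * e n) = star w * w * e n := by
    rw [star_mul, hsa.star_eq, (IsSelfAdjoint.star_mul_self w).star_eq, hcomm.eq]
  rw [star_mul w, hstar]
  nth_rewrite 2 [hcomm.eq]
  noncomm_ring

lemma herSub_star_mul_self (w : A) :
    herSub (star w * w) = closure (Set.range fun x => star w * x * w) := by
  refine (closure_mono ?_).antisymm
    (closure_minimal (Set.range_subset_iff.2 (star_mul_mul_mem_herSub w)) isClosed_closure)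
  rintro _ ⟨x, rfl⟩
  exact ⟨w * x * star w, by noncomm_ring⟩

lemma herSub_star_mul_self_of_isSelfAdjoint {a : A} (ha : IsSelfAdjoint a) :
    herSub (star a * a) = herSub a := by
  rw [herSub_star_mul_self, herSub_eq_closure_range_of_isSelfAdjoint ha]

lemma herSub_star_mul_mul_self (x y : A) :
    herSub (star (y * x) * (y * x)) =
      closure ((fun s => star x * s * x) '' herSub (star y * y)) := by
  rw [herSub_star_mul_self, herSub_star_mul_self,
    closure_image_closure (by fun_prop), ← Set.range_comp]
  congr 2
  ext s
  simp only [Function.comp_apply, star_mul, mul_assoc]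

lemma herSub_star_mul_mul_self_eq {x y : A} (h : herSub (star y * y) = herSub (x * star x)) :
    herSub (star (y * x) * (y * x)) = herSub (star x * x) := by
  have hx := herSub_star_mul_mul_self x (star x)
  rw [star_star] at hx
  rw [herSub_star_mul_mul_self, h, ← hx, herSub_star_mul_self_of_isSelfAdjoint (.star_mul_self x)]

end

/-- Blackadar equivalence is an equivalence relation on positive elements. -/
theorem blackadarEquiv_equivalence [NonUnitalCStarAlgebra A] [PartialOrder A]
    [StarOrderedRing A] :
    (∀ a : A, 0 ≤ a → BlackadarEquiv a a) ∧
    (∀ a b : A, 0 ≤ a → 0 ≤ b → BlackadarEquiv a b → BlackadarEquiv b a) ∧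
    (∀ a b c : A, 0 ≤ a → 0 ≤ b → 0 ≤ c →
      BlackadarEquiv a b → BlackadarEquiv b c → BlackadarEquiv a c) := by
  refine ⟨fun a ha => ?_, ?_, ?_⟩
  · have h := (herSub_star_mul_self_of_isSelfAdjoint ha.isSelfAdjoint).symm
    refine ⟨a, h, ?_⟩
    rwa [ha.isSelfAdjoint.star_eq] at h ⊢
  · rintro a b - - ⟨x, ha, hb⟩
    exact ⟨star x, by rwa [star_star], by rwa [star_star]⟩
  · rintro a b c - - - ⟨x, ha, hb⟩ ⟨y, hb', hc⟩
    refine ⟨y * x, ha.trans (herSub_star_mul_mul_self_eq (hb'.symm.trans hb)).symm, ?_⟩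
    have h := herSub_star_mul_mul_self_eq (x := star y) (y := star x)
      (by rw [star_star, star_star, ← hb, hb'])
    rwa [star_star, ← star_mul, star_star, ← hc, eq_comm] at h
end
end

section
/- Let A be a C*-algebra, let a be a positive element of A, let e be a positive element of A_a, and let ε > 0. Then (e − ε)₊ ⊂⊂ a, i.e. there exists a positive element f ∈ A_a with f (e − ε)₊ = (e − ε)₊. -/
/-!
Take a continuous ramp `g` that vanishes on `(-∞, ε/2]` and equals `1` on `[ε, ∞)`, and put
`f = g(e)`. Then `f ≥ 0`, and `f (e - ε)₊ = (e - ε)₊` because `g = 1` wherever `(t - ε)₊ ≠ 0`.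
Since `g` vanishes near `0`, the function `k t = g t / t²` is continuous with `k 0 = 0`, so
`f = e k(e) e`, which lies in `A_a` because `e` does and `A_a` absorbs products `e x e`.
-/

open Filter Topology

noncomputable section

variable {A : Type*}

lemma mul_mul_self_mem_herSub [NonUnitalCStarAlgebra A] {a e : A} (he : e ∈ herSub a) (x : A) :
    e * x * e ∈ herSub a := by
  refine map_mem_closure (f := fun y : A => y * x * y) (by fun_prop) he ?_
  rintro y ⟨z, rfl⟩
  exact ⟨z * a * x * a * z, by noncomm_ring⟩

lemma continuous_div_sq_of_eventuallyEq_zero {g : ℝ → ℝ} (hg : Continuous g)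
    (hg0 : g =ᶠ[𝓝 0] 0) : Continuous fun t => g t / t ^ 2 := by
  refine continuous_iff_continuousAt.2 fun t => ?_
  rcases eq_or_ne t 0 with rfl | ht
  · have hk0 : (fun t => g t / t ^ 2) =ᶠ[𝓝 0] fun _ => 0 := hg0.mono fun s hs => by simp [hs]
    exact continuousAt_const.congr hk0.symm
  · exact hg.continuousAt.div (by fun_prop) (pow_ne_zero 2 ht)

lemma cfcₙ_eq_mul_mul_self_of_eventuallyEq_zero [NonUnitalCStarAlgebra A] {e : A}
    (he : IsSelfAdjoint e) {g : ℝ → ℝ} (hg : Continuous g) (hg0 : g =ᶠ[𝓝 0] 0) : cfcₙ g e = e * cfcₙ (fun t => g t / t ^ 2) e * e := by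
  have hk := continuous_div_sq_of_eventuallyEq_zero hg hg0
  have hg00 : g 0 = 0 := hg0.eq_of_nhds
  calc cfcₙ g e = cfcₙ (fun t => t * (g t / t ^ 2) * t) e := by
        refine cfcₙ_congr fun t _ => ?_
        rcases eq_or_ne t 0 with rfl | ht
        · simp [hg00]
        · field_simp
    _ = e * cfcₙ (fun t => g t / t ^ 2) e * e := by
        rw [cfcₙ_mul _ _ e (by fun_prop) (by simp [hg00]) (by fun_prop) (by simp),
          cfcₙ_mul _ _ e (by fun_prop) (by simp) hk.continuousOn (by simp [hg00]),
          cfcₙ_id' ℝ e he]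

lemma cfcₙ_mul_cfcₙ_eq_right [NonUnitalCStarAlgebra A] {e : A} {g h : ℝ → ℝ}
    (hg : Continuous g) (hg0 : g 0 = 0) (hh : Continuous h) (hh0 : h 0 = 0)
    (hgh : ∀ t, h t ≠ 0 → g t = 1) : cfcₙ g e * cfcₙ h e = cfcₙ h e := by
  rw [← cfcₙ_mul _ _ e (by fun_prop) hg0 (by fun_prop) hh0]
  refine cfcₙ_congr fun t _ => ?_
  by_cases ht : h t = 0
  · simp [ht]
  · simp [hgh t ht]

def ramp (ε : ℝ) (t : ℝ) : ℝ :=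
  min (max (2 * t / ε - 1) 0) 1

lemma continuous_ramp (ε : ℝ) : Continuous (ramp ε) := by
  unfold ramp; fun_prop

lemma ramp_nonneg (ε t : ℝ) : 0 ≤ ramp ε t :=
  le_min (le_max_right _ _) zero_le_one

lemma ramp_eq_zero {ε t : ℝ} (hε : 0 < ε) (ht : t ≤ ε / 2) : ramp ε t = 0 := by
  have : 2 * t / ε - 1 ≤ 0 := by rw [sub_nonpos, div_le_one hε]; linarith
  simp [ramp, max_eq_right this]

lemma ramp_eq_one {ε t : ℝ} (hε : 0 < ε) (ht : ε ≤ t) : ramp ε t = 1 := by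
  have : 1 ≤ 2 * t / ε - 1 := by rw [le_sub_iff_add_le, le_div_iff₀ hε]; linarith
  simp [ramp, max_eq_left (zero_le_one.trans this), this]

lemma ramp_eventuallyEq_zero {ε : ℝ} (hε : 0 < ε) : ramp ε =ᶠ[𝓝 0] 0 :=
  eventually_of_mem (Iio_mem_nhds (half_pos hε)) fun _ ht => ramp_eq_zero hε (le_of_lt ht)

theorem cut_cpctContained_general [NonUnitalCStarAlgebra A] [PartialOrder A] [StarOrderedRing A]
    (a : A) (e : A) (he : 0 ≤ e) (heA : e ∈ herSub a) (ε : ℝ) (hε : 0 < ε) :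
    ∃ f : A, 0 ≤ f ∧ f ∈ herSub a ∧
      f * cfcₙ (fun t : ℝ => max (t - ε) 0) e = cfcₙ (fun t : ℝ => max (t - ε) 0) e := by
  have hramp0 := ramp_eventuallyEq_zero hε
  have hsupp : ∀ t : ℝ, max (t - ε) 0 ≠ 0 → ramp ε t = 1 := fun t ht =>
    ramp_eq_one hε (not_lt.1 fun hlt => ht (max_eq_right (by linarith)))
  refine ⟨cfcₙ (ramp ε) e, cfcₙ_nonneg fun t _ => ramp_nonneg ε t, ?_, ?_⟩
  · rw [cfcₙ_eq_mul_mul_self_of_eventuallyEq_zero (.of_nonneg he) (continuous_ramp ε) hramp0]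
    exact mul_mul_self_mem_herSub heA _
  · exact cfcₙ_mul_cfcₙ_eq_right (continuous_ramp ε) hramp0.eq_of_nhds (by fun_prop)
      (by simp [hε.le]) hsupp

/-- for positive `e ∈ A_a` and `ε > 0` one has `(e - ε)₊ ⊂⊂ a`. -/
theorem cut_cpctContained [NonUnitalCStarAlgebra A] [PartialOrder A] [StarOrderedRing A]
    (a : A) (ha : 0 ≤ a) (e : A) (he : 0 ≤ e) (heA : e ∈ herSub a) (ε : ℝ) (hε : 0 < ε) :
    ∃ f : A, 0 ≤ f ∧ f ∈ herSub a ∧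
      f * cfcₙ (fun t : ℝ => max (t - ε) 0) e = cfcₙ (fun t : ℝ => max (t - ε) 0) e :=
  cut_cpctContained_general a e he heA ε hε
end
end
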